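/- arXiv:math/0303064 — 3 statements merged into one kernel-verified Lean document; each statement's English description precedes it below -/
import Mathlib

section
/- Suppose for every n and every family of vectors u₁,…,u_r ∈ ℝ^n with |u_j|_∞ ≤ 1 there exist signs ε_j ∈ {−1,+1} with |Σ_j ε_j u_j|_∞ ≤ C₃ (r log(2n/r))^{1/2}. Then for any finite set K ⊆ {1,…,n} with |K| = r and a trigonometric polynomial Σ_{k∈K} A_k with A_k(x) = d_k cos(kx + φ_k), there exist signs σ_k = ±1 (k ∈ K) such that ‖Σ_{k∈K} σ_k A_k‖_∞ ≤ 3C₃ (r log((20n+2)/r))^{1/2} max_k |d_k| and |Σ_{k∈K} σ_k| ≤ C₃ (r log((20n+2)/r))^{1/2}. -/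
/-!
Sample each `A k / D` at the `10 n` points `2π l / (10 n) = π l / (5 n)` and append a
coordinate `1`; Spencer's signs for these `r` vectors of `ℝ^(10 n + 1)` bound the sum of the
signs and the signed polynomial on the grid. The grid controls the whole polynomial through the
de la Vallée Poussin kernel `V_n = (|D_{2n}|² - |D_n|²) / n`, `D_b(t) = ∑_{j<b} e^{ijt}`: on a grid
`t_l = 2π l / L` with `L ≥ 3 n`, every trigonometric polynomial `T` of degree at most `n`
satisfies `L T(x) = ∑_l V_n(x - t_l) T(t_l)`, while `∑_l |V_n(x - t_l)| ≤ 3 L` because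
`∑_l |D_b(x - t_l)|² = b L` for `b ≤ L`.
-/

open Finset Complex
open scoped Real

noncomputable def dirichletSum (b : ℕ) (t : ℝ) : ℂ :=
  ∑ j ∈ range b, exp (j * t * I)

theorem sum_range_exp_mul_two_pi_div {L : ℕ} (hL : L ≠ 0) (m : ℤ) :
    ∑ l ∈ range L, exp (m * (2 * π * l / L) * I) = if (L : ℤ) ∣ m then (L : ℂ) else 0 := by
  have hterm : ∀ l : ℕ, exp (m * (2 * π * l / L) * I) = (exp (2 * π * I / L) ^ m) ^ l := by
    intro l
    rw [← zpow_natCast, ← zpow_mul, ← exp_int_mul]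
    congr 1
    push_cast
    ring
  simp_rw [hterm]
  have hζ := isPrimitiveRoot_exp L hL
  generalize exp (2 * π * I / L) = ζ at hζ
  split_ifs with hdvd
  · simp [(hζ.zpow_eq_one_iff_dvd m).mpr hdvd]
  · have hζm : ζ ^ m ≠ 1 := fun h => hdvd ((hζ.zpow_eq_one_iff_dvd m).mp h)
    rw [geom_sum_eq hζm, ← zpow_natCast, ← zpow_mul, mul_comm, zpow_mul, zpow_natCast,
      hζ.pow_eq_one, one_zpow, sub_self, zero_div]

theorem normSq_dirichletSum (b : ℕ) (t : ℝ) :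
    (normSq (dirichletSum b t) : ℂ) =
      ∑ j ∈ range b, ∑ j' ∈ range b, exp ((j - j' : ℂ) * t * I) := by
  rw [← mul_conj, dirichletSum, map_sum, sum_mul_sum]
  refine sum_congr rfl fun j _ => sum_congr rfl fun j' _ => ?_
  rw [← exp_conj, ← exp_add]
  congr 1
  simp only [map_mul, conj_I, conj_ofReal, map_natCast]
  ring

theorem intCast_dvd_sub_add_iff {L b k j j' : ℕ} (hkb : k + b ≤ L) (hj : j < b) (hj' : j' < b) :
    (L : ℤ) ∣ k - j + j' ↔ j = j' + k := by
  constructor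
  · intro h
    have := Int.eq_zero_of_abs_lt_dvd h (by rw [abs_lt]; omega)
    omega
  · rintro rfl
    simp

-- `b - k` truncates harmlessly: for `k ≥ b` no pair `j = j' + k` survives.
theorem sum_range_normSq_dirichletSum_mul_exp {L b k : ℕ} (hL : L ≠ 0) (hkb : k + b ≤ L)
    (x : ℝ) :
    ∑ l ∈ range L, (normSq (dirichletSum b (x - 2 * π * l / L)) : ℂ) *
        exp (k * (2 * π * l / L) * I) = (b - k : ℕ) * L * exp (k * x * I) := by
  calc _ = ∑ j ∈ range b, ∑ j' ∈ range b, exp ((j - j' : ℂ) * x * I) *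
        ∑ l ∈ range L, exp (((k - j + j' : ℤ) : ℂ) * (2 * π * l / L) * I) := by
        simp_rw [normSq_dirichletSum, sum_mul, mul_sum]
        rw [sum_comm]
        refine sum_congr rfl fun j _ => ?_
        rw [sum_comm]
        refine sum_congr rfl fun j' _ => sum_congr rfl fun l _ => ?_
        rw [← exp_add, ← exp_add]
        congr 1
        push_cast
        ring
    _ = ∑ j' ∈ range b, ∑ j ∈ range b, if j = j' + k then L * exp (k * x * I) else 0 := by
        rw [sum_comm]
        refine sum_congr rfl fun j' hj' => sum_congr rfl fun j hj => ?_
        simp only [sum_range_exp_mul_two_pi_div hL,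
          intCast_dvd_sub_add_iff hkb (mem_range.mp hj) (mem_range.mp hj')]
        split_ifs with h
        · subst h
          rw [mul_comm]
          congr 3
          push_cast
          ring
        · rw [mul_zero]
    _ = _ := by
        simp_rw [sum_ite_eq', mem_range]
        rw [← sum_filter, sum_const, nsmul_eq_mul,
          show (range b).filter (· + k < b) = range (b - k) by ext; simp; omega, card_range]
        ring

theorem sum_range_normSq_dirichletSum {L b : ℕ} (hL : L ≠ 0) (hb : b ≤ L) (x : ℝ) :
    ∑ l ∈ range L, normSq (dirichletSum b (x - 2 * π * l / L)) = b * L := by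
  have h := sum_range_normSq_dirichletSum_mul_exp (b := b) (k := 0) hL (by omega) x
  simp only [CharP.cast_eq_zero, zero_mul, exp_zero, mul_one, Nat.sub_zero] at h
  exact_mod_cast h

noncomputable def vallePoussinKernel (n : ℕ) (t : ℝ) : ℝ :=
  (normSq (dirichletSum (2 * n) t) - normSq (dirichletSum n t)) / n

theorem sum_range_vallePoussinKernel_mul_exp {n L k : ℕ} (hn : n ≠ 0) (hL : 3 * n ≤ L)
    (hk : k ≤ n) (x : ℝ) :
    ∑ l ∈ range L, (vallePoussinKernel n (x - 2 * π * l / L) : ℂ) *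
        exp (k * (2 * π * l / L) * I) = L * exp (k * x * I) := by
  have hL0 : L ≠ 0 := by omega
  simp only [vallePoussinKernel, ofReal_div, ofReal_sub, ofReal_natCast, div_mul_eq_mul_div,
    sub_mul, ← sum_div, sum_sub_distrib,
    sum_range_normSq_dirichletSum_mul_exp hL0 (by omega : k + 2 * n ≤ L),
    sum_range_normSq_dirichletSum_mul_exp hL0 (by omega : k + n ≤ L)]
  rw [Nat.cast_sub (by omega), Nat.cast_sub hk]
  field_simp
  push_cast
  ring

theorem sum_range_vallePoussinKernel_mul_cos {n L k : ℕ} (hn : n ≠ 0) (hL : 3 * n ≤ L)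
    (hk : k ≤ n) (φ x : ℝ) :
    ∑ l ∈ range L, vallePoussinKernel n (x - 2 * π * l / L) * Real.cos (k * (2 * π * l / L) + φ)
      = L * Real.cos (k * x + φ) := by
  have hre : ∀ v θ : ℝ, (v * exp (θ * I) * exp (φ * I)).re = v * Real.cos (θ + φ) := by
    intro v θ
    rw [mul_assoc, ← exp_add, ← add_mul, ← ofReal_add, re_ofReal_mul, exp_ofReal_mul_I_re]
  have h : ∑ l ∈ range L, (vallePoussinKernel n (x - 2 * π * l / L) : ℂ) *
      exp ((k * (2 * π * l / L) : ℝ) * I) = (L : ℝ) * exp ((k * x : ℝ) * I) := by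
    push_cast
    exact sum_range_vallePoussinKernel_mul_exp hn hL hk x
  simpa only [sum_mul, re_sum, hre] using congrArg (fun z => (z * exp (φ * I)).re) h

theorem sum_range_abs_vallePoussinKernel_le {n L : ℕ} (hn : n ≠ 0) (hL : 2 * n ≤ L) (x : ℝ) :
    ∑ l ∈ range L, |vallePoussinKernel n (x - 2 * π * l / L)| ≤ 3 * L := by
  have hL0 : L ≠ 0 := by omega
  calc _ ≤ ∑ l ∈ range L, (normSq (dirichletSum (2 * n) (x - 2 * π * l / L)) +
        normSq (dirichletSum n (x - 2 * π * l / L))) / n := by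
        gcongr with l
        rw [vallePoussinKernel, abs_div, Nat.abs_cast]
        gcongr
        exact (abs_sub _ _).trans_eq <| by
          rw [abs_of_nonneg (normSq_nonneg _), abs_of_nonneg (normSq_nonneg _)]
    _ = 3 * L := by
        rw [← sum_div, sum_add_distrib, sum_range_normSq_dirichletSum hL0 hL,
          sum_range_normSq_dirichletSum hL0 (by omega)]
        field_simp
        push_cast
        ring

noncomputable def cosPoly (K : Finset ℕ) (c φ : ℕ → ℝ) (x : ℝ) : ℝ :=
  ∑ k ∈ K, c k * Real.cos (k * x + φ k)

theorem natCast_mul_cosPoly_eq_sum_range {n L : ℕ} (hn : n ≠ 0) (hL : 3 * n ≤ L)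
    {K : Finset ℕ} (hK : ∀ k ∈ K, k ≤ n) (c φ : ℕ → ℝ) (x : ℝ) :
    L * cosPoly K c φ x =
      ∑ l ∈ range L, vallePoussinKernel n (x - 2 * π * l / L) * cosPoly K c φ (2 * π * l / L) := by
  simp only [cosPoly, mul_sum]
  rw [sum_comm]
  refine sum_congr rfl fun k hk => ?_
  rw [mul_left_comm, ← sum_range_vallePoussinKernel_mul_cos hn hL (hK k hk), mul_sum]
  exact sum_congr rfl fun l _ => by ring

theorem abs_cosPoly_le_three_mul {n L : ℕ} (hn : n ≠ 0) (hL : 3 * n ≤ L) {K : Finset ℕ}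
    (hK : ∀ k ∈ K, k ≤ n) {c φ : ℕ → ℝ} {M : ℝ}
    (hM : ∀ l < L, |cosPoly K c φ (2 * π * l / L)| ≤ M) (x : ℝ) :
    |cosPoly K c φ x| ≤ 3 * M := by
  have hL0 : (0 : ℝ) < L := by norm_cast; omega
  refine le_of_mul_le_mul_left ?_ hL0
  calc L * |cosPoly K c φ x|
      = |∑ l ∈ range L, vallePoussinKernel n (x - 2 * π * l / L) *
          cosPoly K c φ (2 * π * l / L)| := by
        rw [← natCast_mul_cosPoly_eq_sum_range hn hL hK, abs_mul, Nat.abs_cast]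
    _ ≤ ∑ l ∈ range L, |vallePoussinKernel n (x - 2 * π * l / L)| * M := by
        refine (abs_sum_le_sum_abs _ _).trans (sum_le_sum fun l hl => ?_)
        rw [abs_mul]
        gcongr
        exact hM l (mem_range.mp hl)
    _ ≤ 3 * L * M := by
        have hM0 : 0 ≤ M := (abs_nonneg _).trans (hM 0 (by omega))
        rw [← sum_mul]
        gcongr
        exact sum_range_abs_vallePoussinKernel_le hn (by omega) x
    _ = L * (3 * M) := by ring

def SpencerSigns (C₃ : ℝ) : Prop :=
  ∀ (N R : ℕ), 0 < R → R ≤ N → ∀ u : Fin R → Fin N → ℝ,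
    (∀ j i, |u j i| ≤ 1) →
    ∃ ε : Fin R → ℝ, (∀ j, ε j = 1 ∨ ε j = -1) ∧
      ∀ i, |∑ j, ε j * u j i| ≤ C₃ * Real.sqrt ((R : ℝ) * Real.log (2 * (N : ℝ) / (R : ℝ)))

theorem SpencerSigns.exists_finset {C₃ : ℝ} (hC₃ : SpencerSigns C₃) {N : ℕ} {K : Finset ℕ}
    (hK₀ : 0 < #K) (hKN : #K ≤ N) (v : ℕ → Fin N → ℝ) (hv : ∀ k ∈ K, ∀ i, |v k i| ≤ 1) :
    ∃ σ : ℕ → ℝ, (∀ k ∈ K, σ k = 1 ∨ σ k = -1) ∧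
      ∀ i, |∑ k ∈ K, σ k * v k i| ≤ C₃ * Real.sqrt (#K * Real.log (2 * N / #K)) := by
  classical
  let e := K.equivFin
  obtain ⟨ε, hε, hsum⟩ :=
    hC₃ N #K hK₀ hKN (fun j i => v (e.symm j) i) fun j i => hv _ (e.symm j).2 i
  refine ⟨fun k => if hk : k ∈ K then ε (e ⟨k, hk⟩) else 1, fun k hk => by simp [hk, hε],
    fun i => ?_⟩
  convert hsum i using 2
  rw [← sum_coe_sort K]
  exact Fintype.sum_equiv e _ _ fun a => by simp

theorem SpencerSigns.exists_signs_abs_cosPoly_le {C₃ : ℝ} (hC₃ : SpencerSigns C₃) {n L : ℕ}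
    (hn : n ≠ 0) (hL : 3 * n ≤ L) {K : Finset ℕ} (hK : ∀ k ∈ K, k ≤ n) (hK₀ : 0 < #K)
    (hKL : #K ≤ L + 1) {c : ℕ → ℝ} (hc : ∀ k ∈ K, |c k| ≤ 1) (φ : ℕ → ℝ) :
    ∃ σ : ℕ → ℝ, (∀ k ∈ K, σ k = 1 ∨ σ k = -1) ∧
      (∀ x, |cosPoly K (fun k => σ k * c k) φ x| ≤
        3 * (C₃ * Real.sqrt (#K * Real.log (2 * (L + 1 : ℕ) / #K)))) ∧
      |∑ k ∈ K, σ k| ≤ C₃ * Real.sqrt (#K * Real.log (2 * (L + 1 : ℕ) / #K)) := by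
  let v : ℕ → Fin (L + 1) → ℝ := fun k =>
    Fin.snoc (fun l : Fin L => c k * Real.cos (k * (2 * π * l / L) + φ k)) 1
  have hv : ∀ k ∈ K, ∀ i, |v k i| ≤ 1 := fun k hk i => by
    induction i using Fin.lastCases with
    | last => simp [v]
    | cast l =>
      simp only [v, Fin.snoc_castSucc, abs_mul]
      exact mul_le_one₀ (hc k hk) (abs_nonneg _) (Real.abs_cos_le_one _)
  obtain ⟨σ, hσ, hbound⟩ := hC₃.exists_finset hK₀ hKL v hv
  refine ⟨σ, hσ, abs_cosPoly_le_three_mul hn hL hK fun l hl => ?_,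
    by simpa [v] using hbound (Fin.last L)⟩
  have h := hbound (Fin.castSucc ⟨l, hl⟩)
  simp only [v, Fin.snoc_castSucc] at h
  simpa only [cosPoly, mul_assoc] using h

theorem stmt6_general (C₃ : ℝ)
    (hSpencer : ∀ (N R : ℕ), 0 < R → R ≤ N → ∀ u : Fin R → Fin N → ℝ,
      (∀ j i, |u j i| ≤ 1) →
      ∃ ε : Fin R → ℝ, (∀ j, ε j = 1 ∨ ε j = -1) ∧
        ∀ i, |∑ j, ε j * u j i| ≤ C₃ * Real.sqrt ((R : ℝ) * Real.log (2 * (N : ℝ) / (R : ℝ))))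
    (n : ℕ) (K : Finset ℕ) (hK : K ⊆ Finset.Icc 1 n)
    (r : ℕ) (hr : K.card = r) (hrpos : 0 < r)
    (d φ : ℕ → ℝ) (D : ℝ) (hD : ∀ k ∈ K, |d k| ≤ D) :
    ∃ σ : ℕ → ℝ, (∀ k ∈ K, σ k = 1 ∨ σ k = -1) ∧
      (∀ x : ℝ,
        |∑ k ∈ K, σ k * (d k * Real.cos ((k : ℝ) * x + φ k))|
          ≤ 3 * C₃ * Real.sqrt ((r : ℝ) * Real.log ((20 * (n : ℝ) + 2) / (r : ℝ))) * D) ∧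
      |∑ k ∈ K, σ k| ≤ C₃ * Real.sqrt ((r : ℝ) * Real.log ((20 * (n : ℝ) + 2) / (r : ℝ))) := by
  subst hr
  have hKn : ∀ k ∈ K, k ≤ n := fun k hk => (mem_Icc.mp (hK hk)).2
  have hrn : #K ≤ n := by simpa using card_le_card hK
  obtain ⟨k₀, hk₀⟩ := card_pos.mp hrpos
  have hD₀ : 0 ≤ D := (abs_nonneg _).trans (hD k₀ hk₀)
  have hdD : ∀ k ∈ K, D * (d k / D) = d k := fun k hk => by
    rcases eq_or_ne D 0 with rfl | hD
    · simp [abs_nonpos_iff.mp (hD k hk)]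
    · exact mul_div_cancel₀ _ hD
  have hc : ∀ k ∈ K, |d k / D| ≤ 1 := fun k hk => by
    rw [abs_div, abs_of_nonneg hD₀]
    exact div_le_one_of_le₀ (hD k hk) hD₀
  obtain ⟨σ, hσ, hpoly, hsum⟩ := SpencerSigns.exists_signs_abs_cosPoly_le hSpencer
    (L := 10 * n) (by omega) (by omega) hKn hrpos (by omega) hc φ
  have hlog : 2 * ((10 * n + 1 : ℕ) : ℝ) / #K = (20 * n + 2) / #K := by push_cast; ring
  rw [hlog] at hpoly hsum
  refine ⟨σ, hσ, fun x => ?_, hsum⟩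
  calc _ = D * |cosPoly K (fun k => σ k * (d k / D)) φ x| := by
        rw [← abs_of_nonneg hD₀, ← abs_mul, cosPoly, mul_sum, abs_of_nonneg hD₀]
        refine congrArg abs (sum_congr rfl fun k hk => ?_)
        conv_lhs => rw [← hdD k hk]
        ring
    _ ≤ D * (3 * (C₃ * Real.sqrt (#K * Real.log ((20 * n + 2) / #K)))) := by
        gcongr
        exact hpoly x
    _ = _ := by ring

/-- Corollary 1, discretization step: assuming Spencer's theorem (for every `N` and
vectors `u 1,…,u R ∈ ℝ^N` with sup-norm at most 1 there are signs `ε` with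
`|∑ ε j • u j|_∞ ≤ C₃ √(R log(2N/R))`), for any `K ⊆ {1,…,n}` with `|K| = r` and a
trigonometric polynomial `∑_{k∈K} d k cos(k x + φ k)` there are signs `σ k = ±1`
with `‖∑ σ k A k‖_∞ ≤ 3 C₃ √(r log((20n+2)/r)) max|d k|` and
`|∑ σ k| ≤ C₃ √(r log((20n+2)/r))`. -/
theorem stmt6 (C₃ : ℝ) (hC₃ : 0 < C₃)
    (hSpencer : ∀ (N R : ℕ), 0 < R → R ≤ N → ∀ u : Fin R → Fin N → ℝ,
      (∀ j i, |u j i| ≤ 1) →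
      ∃ ε : Fin R → ℝ, (∀ j, ε j = 1 ∨ ε j = -1) ∧
        ∀ i, |∑ j, ε j * u j i| ≤ C₃ * Real.sqrt ((R : ℝ) * Real.log (2 * (N : ℝ) / (R : ℝ))))
    (n : ℕ) (hn : 1 ≤ n) (K : Finset ℕ) (hK : K ⊆ Finset.Icc 1 n)
    (r : ℕ) (hr : K.card = r) (hrpos : 0 < r)
    (d φ : ℕ → ℝ) (D : ℝ) (hD : ∀ k ∈ K, |d k| ≤ D) :
    ∃ σ : ℕ → ℝ, (∀ k ∈ K, σ k = 1 ∨ σ k = -1) ∧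
      (∀ x : ℝ,
        |∑ k ∈ K, σ k * (d k * Real.cos ((k : ℝ) * x + φ k))|
          ≤ 3 * C₃ * Real.sqrt ((r : ℝ) * Real.log ((20 * (n : ℝ) + 2) / (r : ℝ))) * D) ∧
      |∑ k ∈ K, σ k| ≤ C₃ * Real.sqrt ((r : ℝ) * Real.log ((20 * (n : ℝ) + 2) / (r : ℝ))) :=
  stmt6_general C₃ hSpencer n K hK r hr hrpos d φ D hD
end

section
/- For any trigonometric polynomial T of degree at most n, ‖T‖_∞ ≤ 3 max_{l=0,…,10n−1} |T(πl/(5n))|. -/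
/-!
The `N ≥ 3n` nodes `2πl/N` integrate every trigonometric polynomial of degree `< N` exactly.
Applied to `T(t) V(x - t)`, where `V = 2K_{2n-1} - K_{n-1}` is the de la Vallée-Poussin kernel
(`K_m` the Fejér kernel), whose Fourier coefficients are `1` on `|k| ≤ n`, this gives
`T(x) = (1/N) ∑_l T(2πl/N) V(x - 2πl/N)`. As `V` is a difference of nonnegative kernels of
mean `2` and `1`, the same quadrature bounds `(1/N) ∑_l |V(x - 2πl/N)|` by `3`.
-/

open Finset Complex
open scoped ComplexConjugate

noncomputable section

def fourierExp (k : ℤ) (x : ℝ) : ℂ := exp (k * x * I)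

def trigPoly (S : Finset ℤ) (c : ℤ → ℂ) (x : ℝ) : ℂ := ∑ k ∈ S, c k * fourierExp k x

def gridPoint (N l : ℕ) : ℝ := 2 * Real.pi * l / N

lemma fourierExp_mul_fourierExp (j k : ℤ) (x : ℝ) :
    fourierExp j x * fourierExp k x = fourierExp (j + k) x := by
  simp only [fourierExp, ← exp_add]; push_cast; ring_nf

lemma fourierExp_sub (j : ℤ) (x y : ℝ) :
    fourierExp j (x - y) = fourierExp j x * fourierExp (-j) y := by
  simp only [fourierExp, ← exp_add]; push_cast; ring_nf

lemma conj_fourierExp (j : ℤ) (x : ℝ) : conj (fourierExp j x) = fourierExp (-j) x := by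
  simp only [fourierExp, ← exp_conj, map_mul, conj_I, map_intCast, conj_ofReal]
  push_cast; ring_nf

lemma fourierExp_gridPoint {N : ℕ} (hN : N ≠ 0) (m : ℤ) (l : ℕ) :
    fourierExp m (gridPoint N l) = ((exp (2 * Real.pi * I / N)) ^ m) ^ l := by
  rw [← exp_int_mul, ← exp_nat_mul, fourierExp, gridPoint]
  congr 1
  push_cast
  field_simp

lemma sum_fourierExp_gridPoint {N : ℕ} (hN : N ≠ 0) (m : ℤ) :
    ∑ l ∈ range N, fourierExp m (gridPoint N l) = if (N : ℤ) ∣ m then (N : ℂ) else 0 := by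
  have hζ := isPrimitiveRoot_exp N hN
  simp only [fourierExp_gridPoint hN]
  split_ifs with hdvd
  · simp [(hζ.zpow_eq_one_iff_dvd m).mpr hdvd]
  · have hpow : ((exp (2 * Real.pi * I / N)) ^ m) ^ N = 1 := by
      rw [← zpow_natCast, ← zpow_mul, mul_comm m, zpow_mul, zpow_natCast, hζ.pow_eq_one, one_zpow]
    rw [geom_sum_eq (mt (hζ.zpow_eq_one_iff_dvd m).mp hdvd), hpow, sub_self, zero_div]

theorem sum_trigPoly_gridPoint_mul_trigPoly_sub {N : ℕ} (hN : N ≠ 0) {R S : Finset ℤ}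
    (c a : ℤ → ℂ) (halias : ∀ k ∈ R, ∀ j ∈ S, (N : ℤ) ∣ k - j → k = j)
    (ha : ∀ k ∈ R, k ∉ S → a k = 0) (x : ℝ) :
    ∑ l ∈ range N, trigPoly R c (gridPoint N l) * trigPoly S a (x - gridPoint N l)
      = N * trigPoly R (fun k => c k * a k) x := by
  have hterm : ∀ k j (t : ℝ), c k * fourierExp k t * (a j * fourierExp j (x - t))
      = c k * a j * fourierExp j x * fourierExp (k - j) t := by
    intro k j t
    rw [fourierExp_sub, sub_eq_add_neg, ← fourierExp_mul_fourierExp]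
    ring
  have horth : ∀ k ∈ R, ∀ j ∈ S,
      ∑ l ∈ range N, fourierExp (k - j) (gridPoint N l) = if j = k then (N : ℂ) else 0 := by
    intro k hk j hj
    rw [sum_fourierExp_gridPoint hN]
    by_cases hjk : j = k
    · simp [hjk]
    · rw [if_neg hjk, if_neg fun hdvd => hjk (halias k hk j hj hdvd).symm]
  calc ∑ l ∈ range N, trigPoly R c (gridPoint N l) * trigPoly S a (x - gridPoint N l)
      = ∑ k ∈ R, ∑ j ∈ S, c k * a j * fourierExp j x *
          ∑ l ∈ range N, fourierExp (k - j) (gridPoint N l) := by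
        simp_rw [trigPoly, sum_mul_sum, hterm]
        simp_rw [mul_sum]
        rw [sum_comm]
        exact sum_congr rfl fun k _ => sum_comm
    _ = ∑ k ∈ R, N * (c k * a k * fourierExp k x) := by
        refine sum_congr rfl fun k hk => ?_
        rw [sum_congr rfl fun j hj => by rw [horth k hk j hj, mul_ite, mul_zero], sum_ite_eq']
        split_ifs with hkS
        · ring
        · simp [ha k hk hkS]
    _ = N * trigPoly R (fun k => c k * a k) x := by
        rw [trigPoly, mul_sum]

/-- `(m + 1) K_m`, with `K_m` the Fejér kernel. -/
def fejer (m : ℕ) (θ : ℝ) : ℝ := normSq (∑ p ∈ range (m + 1), fourierExp p θ)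

/-- Natural subtraction makes this vanish for `|j| > m`. -/
def fejerCoeff (m : ℕ) (j : ℤ) : ℂ := ((m + 1 - j.natAbs : ℕ) : ℂ)

lemma card_filter_sub_eq (m : ℕ) (j : ℤ) :
    #{pq ∈ range (m + 1) ×ˢ range (m + 1) | (pq.1 : ℤ) - pq.2 = j} = m + 1 - j.natAbs := by
  have himage : {pq ∈ range (m + 1) ×ˢ range (m + 1) | (pq.1 : ℤ) - pq.2 = j}
      = (range (m + 1 - j.natAbs)).image fun q => (q + j.toNat, q + (-j).toNat) := by
    ext ⟨p, q⟩
    simp only [mem_filter, mem_product, mem_range, mem_image, Prod.ext_iff]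
    constructor
    · rintro ⟨⟨hp, hq⟩, h⟩
      exact ⟨min p q, by omega, by omega, by omega⟩
    · rintro ⟨a, ha, rfl, rfl⟩
      exact ⟨⟨by omega, by omega⟩, by push_cast; omega⟩
  rw [himage, card_image_of_injective _ fun a b h => by have := (Prod.ext_iff.mp h).1; omega,
    card_range]

lemma fejer_eq_trigPoly (m : ℕ) (θ : ℝ) :
    (fejer m θ : ℂ) = trigPoly (Icc (-m : ℤ) m) (fejerCoeff m) θ := by
  have hmaps : ∀ pq ∈ range (m + 1) ×ˢ range (m + 1), (pq.1 : ℤ) - pq.2 ∈ Icc (-m : ℤ) m := by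
    intro pq hpq
    simp only [mem_product, mem_range] at hpq
    simp only [mem_Icc]
    omega
  rw [fejer, ← mul_conj, map_sum, sum_mul_sum, ← sum_product', ← sum_fiberwise_of_maps_to hmaps]
  refine sum_congr rfl fun j _ => ?_
  rw [sum_congr rfl fun pq hpq => by
      rw [conj_fourierExp, fourierExp_mul_fourierExp, ← sub_eq_add_neg, (mem_filter.mp hpq).2],
    sum_const, card_filter_sub_eq, nsmul_eq_mul, fejerCoeff]

lemma fejer_nonneg (m : ℕ) (θ : ℝ) : 0 ≤ fejer m θ := normSq_nonneg _

theorem sum_trigPoly_gridPoint_mul_fejer_sub {n m N : ℕ} (h : n + m < N) (c : ℤ → ℂ) (x : ℝ) :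
    ∑ l ∈ range N, trigPoly (Icc (-n : ℤ) n) c (gridPoint N l) * fejer m (x - gridPoint N l)
      = N * trigPoly (Icc (-n : ℤ) n) (fun k => c k * fejerCoeff m k) x := by
  simp only [fejer_eq_trigPoly]
  refine sum_trigPoly_gridPoint_mul_trigPoly_sub (by omega) c _ (fun k hk j hj hdvd => ?_)
    (fun k _ hk => ?_) x
  · simp only [mem_Icc] at hk hj
    have := Int.eq_zero_of_abs_lt_dvd hdvd (by rw [abs_lt]; omega)
    omega
  · simp only [mem_Icc] at hk
    rw [fejerCoeff, Nat.cast_eq_zero]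
    omega

theorem sum_fejer_sub_gridPoint {m N : ℕ} (h : m < N) (x : ℝ) :
    ∑ l ∈ range N, fejer m (x - gridPoint N l) = (m + 1) * N := by
  have := sum_trigPoly_gridPoint_mul_fejer_sub (n := 0) (m := m) (N := N) (by omega) (fun _ => 1) x
  simp only [trigPoly, CharP.cast_eq_zero, neg_zero, Icc_self, sum_singleton, one_mul,
    fourierExp, Int.cast_zero, zero_mul, exp_zero, mul_one, fejerCoeff, Int.natAbs_zero,
    Nat.sub_zero] at this
  rw [← ofReal_inj]
  push_cast
  rw [this]
  push_cast
  ring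

/-- `n` times the de la Vallée-Poussin kernel `2K_{2n-1} - K_{n-1}`. -/
def valleePoussin (n : ℕ) (θ : ℝ) : ℝ := fejer (2 * n - 1) θ - fejer (n - 1) θ

lemma fejerCoeff_sub_fejerCoeff {n : ℕ} (hn : 1 ≤ n) {k : ℤ} (hk : k ∈ Icc (-n : ℤ) n) :
    fejerCoeff (2 * n - 1) k - fejerCoeff (n - 1) k = n := by
  simp only [mem_Icc] at hk
  rw [fejerCoeff, fejerCoeff, Nat.cast_sub (by omega), Nat.cast_sub (by omega)]
  push_cast [Nat.sub_add_cancel hn, Nat.sub_add_cancel (by omega : 1 ≤ 2 * n)]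
  ring

theorem sum_trigPoly_gridPoint_mul_valleePoussin_sub {n N : ℕ} (hn : 1 ≤ n) (hN : 3 * n ≤ N)
    (c : ℤ → ℂ) (x : ℝ) :
    ∑ l ∈ range N, trigPoly (Icc (-n : ℤ) n) c (gridPoint N l) * valleePoussin n (x - gridPoint N l)
      = N * n * trigPoly (Icc (-n : ℤ) n) c x := by
  simp only [valleePoussin, ofReal_sub, mul_sub, sum_sub_distrib]
  rw [sum_trigPoly_gridPoint_mul_fejer_sub (by omega), sum_trigPoly_gridPoint_mul_fejer_sub (by omega),
    ← mul_sub, trigPoly, trigPoly, trigPoly, ← sum_sub_distrib]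
  simp only [mul_sum]
  refine sum_congr rfl fun k hk => ?_
  rw [← fejerCoeff_sub_fejerCoeff hn hk]
  ring

theorem sum_abs_valleePoussin_sub_gridPoint_le {n N : ℕ} (hn : 1 ≤ n) (hN : 3 * n ≤ N) (x : ℝ) :
    ∑ l ∈ range N, |valleePoussin n (x - gridPoint N l)| ≤ 3 * n * N := by
  calc ∑ l ∈ range N, |valleePoussin n (x - gridPoint N l)|
      ≤ ∑ l ∈ range N, (fejer (2 * n - 1) (x - gridPoint N l) + fejer (n - 1) (x - gridPoint N l)) :=
        sum_le_sum fun l _ => (abs_sub _ _).trans_eq <| by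
          rw [abs_of_nonneg (fejer_nonneg _ _), abs_of_nonneg (fejer_nonneg _ _)]
    _ = 3 * n * N := by
        rw [sum_add_distrib, sum_fejer_sub_gridPoint (by omega), sum_fejer_sub_gridPoint (by omega)]
        push_cast [Nat.cast_sub hn, Nat.cast_sub (by omega : 1 ≤ 2 * n)]
        ring

theorem norm_trigPoly_le_of_norm_trigPoly_gridPoint_le {n N : ℕ} (hn : 1 ≤ n) (hN : 3 * n ≤ N)
    (c : ℤ → ℂ) {M : ℝ} (hM : ∀ l ∈ range N, ‖trigPoly (Icc (-n : ℤ) n) c (gridPoint N l)‖ ≤ M)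
    (x : ℝ) : ‖trigPoly (Icc (-n : ℤ) n) c x‖ ≤ 3 * M := by
  have hM0 : 0 ≤ M := (norm_nonneg _).trans (hM 0 (mem_range.mpr (by omega)))
  have hpos : (0 : ℝ) < N * n := by exact_mod_cast Nat.mul_pos (by omega : 0 < N) hn
  have key : N * n * ‖trigPoly (Icc (-n : ℤ) n) c x‖ ≤ N * n * (3 * M) := calc
    N * n * ‖trigPoly (Icc (-n : ℤ) n) c x‖
      = ‖∑ l ∈ range N, trigPoly (Icc (-n : ℤ) n) c (gridPoint N l) *
          valleePoussin n (x - gridPoint N l)‖ := by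
        rw [sum_trigPoly_gridPoint_mul_valleePoussin_sub hn hN, norm_mul, norm_mul,
          Complex.norm_natCast, Complex.norm_natCast]
    _ ≤ ∑ l ∈ range N, M * |valleePoussin n (x - gridPoint N l)| := by
        refine (norm_sum_le _ _).trans (sum_le_sum fun l hl => ?_)
        rw [norm_mul, norm_real, Real.norm_eq_abs]
        exact mul_le_mul_of_nonneg_right (hM l hl) (abs_nonneg _)
    _ ≤ M * (3 * n * N) := by
        rw [← mul_sum]
        exact mul_le_mul_of_nonneg_left (sum_abs_valleePoussin_sub_gridPoint_le hn hN x) hM0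
    _ = N * n * (3 * M) := by ring
  exact le_of_mul_le_mul_left key hpos

end

/-- Marcinkiewicz–Zygmund type discretization: for any trigonometric polynomial
`T x = ∑_{|k| ≤ n} c k e^{ikx}` of degree at most `n ≥ 1`,
`‖T‖_∞ ≤ 3 max_{0 ≤ l < 10n} |T(π l/(5n))|`. -/
theorem stmt7 (n : ℕ) (hn : 1 ≤ n) (c : ℤ → ℂ) (M : ℝ)
    (hM : ∀ l ∈ Finset.range (10 * n),
      ‖(∑ k ∈ Finset.Icc (-(n : ℤ)) (n : ℤ),
        c k * Complex.exp ((k : ℂ) * (Real.pi * l / (5 * n) : ℝ) * Complex.I))‖ ≤ M) :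
    ∀ x : ℝ,
      ‖(∑ k ∈ Finset.Icc (-(n : ℤ)) (n : ℤ),
        c k * Complex.exp ((k : ℂ) * (x : ℝ) * Complex.I))‖ ≤ 3 * M := by
  have hgrid (l : ℕ) : gridPoint (10 * n) l = Real.pi * l / (5 * n) := by
    rw [gridPoint]
    push_cast
    field_simp
    ring
  exact norm_trigPoly_le_of_norm_trigPoly_gridPoint_le (N := 10 * n) hn (by omega) c
    (fun l hl => by simpa only [trigPoly, fourierExp, hgrid] using hM l hl)
end

section
/- Let f : ℝ/2πℤ → ℂ be continuous with Fourier series Σ_k A_k, and suppose that for a sequence of finite sets L₁ ⊆ L₂ ⊆ … ⊆ ℕ one has ‖f − d₀ − Σ_{k∈L_λ} A_k‖_∞ → 0 as λ → ∞, and moreover for each λ there is an ordering σ_λ of L_{λ+1} \ L_λ such that every partial sum along σ_λ of Σ_{k∈L_{λ+1}\L_λ} A_k has sup norm at most ε_λ + ‖Σ_{k∈L_{λ+1}\L_λ} A_k‖ with ε_λ → 0. Then there is a bijection σ : ℕ → ℕ (enumerating the L_λ in blocks) such that ‖f − d₀ − Σ_{j=1}^m A_{σ(j)}‖_∞ → 0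 as m → ∞. -/
/-!
Enumerate `L 0` in any order and then each block `L (λ + 1) \ L λ` in the order `σ_λ`.
A partial sum that ends inside block `λ` is the sum over `L λ` plus a partial sum of the block,
so its error is at most `δ λ + ε λ + sup ‖block sum‖`; the block sum is the difference of the
errors along `L λ` and `L (λ + 1)`, hence has sup norm at most `δ λ + δ (λ + 1)`.
-/

open Filter Set

theorem exists_bijOn_Icc_card {α : Type*} [Nonempty α] (s : Finset α) :
    ∃ τ : ℕ → α, BijOn τ (Icc 1 s.card) s :=
  (finite_Icc 1 s.card).exists_bijOn_of_encard_eq <| by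
    rw [← Finset.coe_Icc, encard_coe_eq_coe_finsetCard, encard_coe_eq_coe_finsetCard, Nat.card_Icc,
      Nat.add_sub_cancel]

theorem bijOn_tsub_Ioc (a b : ℕ) : BijOn (· - a) (Ioc a b) (Icc 1 (b - a)) := by
  refine ⟨fun j hj => ?_, fun i hi j hj (h : i - a = j - a) => ?_, fun i hi => ⟨i + a, ?_, ?_⟩⟩
  all_goals simp only [mem_Ioc, mem_Icc] at *
  all_goals omega

theorem norm_sum_sdiff_le {ι E : Type*} [DecidableEq ι] [SeminormedAddCommGroup E]
    {s t : Finset ι} (h : s ⊆ t) (g : E) (a : ι → E) :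
    ‖∑ i ∈ t \ s, a i‖ ≤ ‖g - ∑ i ∈ s, a i‖ + ‖g - ∑ i ∈ t, a i‖ := by
  rw [Finset.sum_sdiff_eq_sub h]
  calc ‖∑ i ∈ t, a i - ∑ i ∈ s, a i‖
      = ‖(g - ∑ i ∈ s, a i) - (g - ∑ i ∈ t, a i)‖ := by congr 1; abel
    _ ≤ _ := norm_sub_le _ _

/-- The index `n` of the block `(c n, c (n + 1)]` that contains `j`. -/
noncomputable def blockIndex (c : ℕ → ℕ) (j : ℕ) : ℕ := sInf {n | j ≤ c (n + 1)}

section BlockIndex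

variable {c : ℕ → ℕ} {j n : ℕ}

theorem le_apply_blockIndex_succ (h : ∃ n, j ≤ c (n + 1)) : j ≤ c (blockIndex c j + 1) :=
  Nat.sInf_mem h

theorem apply_blockIndex_lt (hj : c 0 < j) : c (blockIndex c j) < j := by
  rcases h : blockIndex c j with _ | n
  · exact hj
  · have : n ∉ {n | j ≤ c (n + 1)} := Nat.notMem_of_lt_sInf (by rw [← blockIndex, h]; omega)
    simpa using this

theorem blockIndex_eq (hc : Monotone c) (h₁ : c n < j) (h₂ : j ≤ c (n + 1)) :
    blockIndex c j = n := by
  refine le_antisymm (Nat.sInf_le h₂) (not_lt.1 fun hlt => ?_)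
  have := (le_apply_blockIndex_succ ⟨n, h₂⟩).trans (hc (Nat.succ_le_of_lt hlt))
  omega

theorem tendsto_blockIndex (hc : Monotone c) (hunb : ∀ j, ∃ n, j ≤ c n) :
    Tendsto (blockIndex c) atTop atTop := by
  refine tendsto_atTop_atTop.2 fun N => ⟨c N + 1, fun j hj => not_lt.1 fun hlt => ?_⟩
  obtain ⟨n, hn⟩ := hunb j
  have := (le_apply_blockIndex_succ ⟨n, hn.trans (hc (n.le_add_right 1))⟩).trans
    (hc (Nat.succ_le_of_lt hlt))
  omega

theorem tendsto_zero_of_le_on_blocks (hc : Monotone c) (hunb : ∀ j, ∃ n, j ≤ c n)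
    {u b : ℕ → ℝ} (hu : 0 ≤ u) (hb : Tendsto b atTop (nhds 0))
    (h : ∀ n m, c n < m → m ≤ c (n + 1) → u m ≤ b n) : Tendsto u atTop (nhds 0) := by
  refine squeeze_zero' (.of_forall hu) ?_ (hb.comp (tendsto_blockIndex hc hunb))
  filter_upwards [eventually_gt_atTop (c 0)] with m hm
  obtain ⟨n, hn⟩ := hunb m
  exact h _ m (apply_blockIndex_lt hm)
    (le_apply_blockIndex_succ ⟨n, hn.trans (hc (n.le_add_right 1))⟩)

end BlockIndex

noncomputable def blockEnum {α : Type*} (c : ℕ → ℕ) (τ : ℕ → ℕ → α) (j : ℕ) : α :=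
  τ (blockIndex c j) (j - c (blockIndex c j))

section BlockEnum

variable {α : Type*} {M : ℕ → Finset α} {τ : ℕ → ℕ → α}

theorem blockEnum_eq {c : ℕ → ℕ} (hc : Monotone c) {j n : ℕ} (h₁ : c n < j)
    (h₂ : j ≤ c (n + 1)) :
    blockEnum c τ j = τ n (j - c n) := by
  rw [blockEnum, blockIndex_eq hc h₁ h₂]

variable [DecidableEq α]

theorem bijOn_blockEnum_Ioc (hM : Monotone M)
    (hτ : ∀ n, BijOn (τ n) (Icc 1 (M (n + 1) \ M n).card) ↑(M (n + 1) \ M n)) (n : ℕ) :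
    BijOn (blockEnum (fun n => (M n).card) τ) (Ioc (M n).card (M (n + 1)).card)
      ↑(M (n + 1) \ M n) := by
  have hcard := Finset.card_sdiff_of_subset (hM (n.le_add_right 1))
  refine ((hτ n).comp (hcard ▸ bijOn_tsub_Ioc _ _)).congr fun j hj => ?_
  exact (blockEnum_eq (fun _ _ h => Finset.card_le_card (hM h)) hj.1 hj.2).symm

theorem bijOn_blockEnum (hM : Monotone M)
    (hτ : ∀ n, BijOn (τ n) (Icc 1 (M (n + 1) \ M n).card) ↑(M (n + 1) \ M n))
    (h₀ : M 0 = ∅) (n : ℕ) :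
    BijOn (blockEnum (fun n => (M n).card) τ) (Icc 1 (M n).card) (M n) := by
  induction n with
  | zero => simp [h₀]
  | succ n ih =>
    have hle := Finset.card_le_card (hM (n.le_add_right 1))
    have hIcc : Icc 1 (M n).card ∪ Ioc (M n).card (M (n + 1)).card = Icc 1 (M (n + 1)).card := by
      ext j; simp only [mem_union, mem_Icc, mem_Ioc]; omega
    have hM' : (↑(M n) ∪ ↑(M (n + 1) \ M n) : Set α) = M (n + 1) := by
      rw [← Finset.coe_union, Finset.union_sdiff_of_subset (hM (n.le_add_right 1))]
    rw [← hIcc, ← hM']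
    have hblock := bijOn_blockEnum_Ioc hM hτ n
    refine ih.union hblock <| (injOn_union ?_).2 ⟨ih.injOn, hblock.injOn, ?_⟩
    · exact disjoint_left.2 fun j hj hj' => (not_lt.2 (mem_Icc.1 hj).2) (mem_Ioc.1 hj').1
    · intro i hi j hj hij
      exact (Finset.mem_sdiff.1 (hblock.mapsTo hj)).2 (hij ▸ ih.mapsTo hi)

theorem sum_Icc_blockEnum {β : Type*} [AddCommMonoid β] (hM : Monotone M)
    (hτ : ∀ n, BijOn (τ n) (Icc 1 (M (n + 1) \ M n).card) ↑(M (n + 1) \ M n))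
    (h₀ : M 0 = ∅) (a : α → β) {n m : ℕ}
    (h₁ : (M n).card < m) (h₂ : m ≤ (M (n + 1)).card) :
    ∑ j ∈ Finset.Icc 1 m, a (blockEnum (fun n => (M n).card) τ j)
      = ∑ k ∈ M n, a k + ∑ i ∈ Finset.Icc 1 (m - (M n).card), a (τ n i) := by
  have hinit := bijOn_blockEnum hM hτ h₀ n
  rw [← Finset.coe_Icc] at hinit
  have hinit_sum : ∑ j ∈ Finset.Icc 1 (M n).card, a (blockEnum (fun n => (M n).card) τ j)
      = ∑ k ∈ M n, a k := by
    rw [← Finset.sum_image hinit.injOn]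
    exact congrArg (Finset.sum · a)
      (Finset.coe_injective (by rw [Finset.coe_image, hinit.image_eq]))
  have hIoc (k : ℕ) : Finset.Icc 1 k = Finset.Ioc 0 k := Finset.Icc_add_one_left_eq_Ioc 0 k
  rw [hIoc, ← Finset.sum_Ioc_consecutive _ (Nat.zero_le _) h₁.le, ← hIoc, hinit_sum]
  congr 1
  refine Finset.sum_nbij' (· - (M n).card) (· + (M n).card) ?_ ?_ ?_ ?_ fun j hj => ?_
  · intro j hj; simp only [Finset.mem_Ioc, Finset.mem_Icc] at hj ⊢; omega
  · intro i hi; simp only [Finset.mem_Ioc, Finset.mem_Icc] at hi ⊢; omega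
  · intro j hj; simp only [Finset.mem_Ioc] at hj; omega
  · exact fun i _ => Nat.add_sub_cancel i _
  · rw [Finset.mem_Ioc] at hj
    rw [blockEnum_eq (fun _ _ h => Finset.card_le_card (hM h)) hj.1 (hj.2.trans h₂)]

end BlockEnum

def seqCons {α : Type*} (a : α) (s : ℕ → α) : ℕ → α
  | 0 => a
  | n + 1 => s n

theorem exists_enum_of_blocks {α β : Type*} [Nonempty α] [DecidableEq α] [AddCommMonoid β]
    {L : ℕ → Finset α} (hL : Monotone L) {τ : ℕ → ℕ → α}
    (hτ : ∀ n, BijOn (τ n) (Icc 1 (L (n + 1) \ L n).card) ↑(L (n + 1) \ L n)) :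
    ∃ σ : ℕ → α, (∀ n, BijOn σ (Icc 1 (L n).card) (L n)) ∧
      ∀ (a : α → β) n m, (L n).card < m → m ≤ (L (n + 1)).card →
        ∑ j ∈ Finset.Icc 1 m, a (σ j)
          = ∑ k ∈ L n, a k + ∑ i ∈ Finset.Icc 1 (m - (L n).card), a (τ n i) := by
  obtain ⟨τ₀, hτ₀⟩ := exists_bijOn_Icc_card (L 0)
  have hM : Monotone (seqCons ∅ L) := monotone_nat_of_le_succ fun
    | 0 => Finset.empty_subset _
    | n + 1 => hL n.le_succ
  have hτ' : ∀ n, BijOn (seqCons τ₀ τ n) (Icc 1 (seqCons ∅ L (n + 1) \ seqCons ∅ L n).card)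
      ↑(seqCons ∅ L (n + 1) \ seqCons ∅ L n)
    | 0 => by simpa [seqCons] using hτ₀
    | n + 1 => hτ n
  exact ⟨_, fun n => bijOn_blockEnum hM hτ' rfl (n + 1),
    fun a n m => sum_Icc_blockEnum hM hτ' rfl a (n := n + 1)⟩

theorem bijOn_Ici_one_iUnion {α : Type*} {L : ℕ → Finset α} (hL : Monotone L)
    (hunb : ∀ j, ∃ n, j ≤ (L n).card) {σ : ℕ → α}
    (hσ : ∀ n, BijOn σ (Icc 1 (L n).card) (L n)) : BijOn σ (Ici 1) (⋃ n, (L n : Set α)) := by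
  have hIcc : ⋃ n, Icc 1 (L n).card = Ici 1 :=
    Set.ext fun j => by simpa [mem_iUnion] using fun _ => hunb j
  rw [← hIcc]
  exact bijOn_iUnion_of_directed
    (Monotone.directed_le fun _ _ h => Icc_subset_Icc_right (Finset.card_le_card (hL h))) hσ

theorem exists_le_card_of_forall_mem {L : ℕ → Finset ℕ} (hL : Monotone L)
    (hexh : ∀ k, 1 ≤ k → ∃ n, k ∈ L n) (j : ℕ) : ∃ n, j ≤ (L n).card := by
  obtain ⟨n, hn⟩ := hL.directed_le.exists_mem_subset_of_finset_subset_biUnion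
    (s := Finset.Icc 1 j) fun k hk => mem_iUnion.2 (hexh k (Finset.mem_Icc.1 hk).1)
  exact ⟨n, by simpa using Finset.card_le_card (Finset.coe_subset.1 hn)⟩

theorem stmt12_general (f : ℝ → ℂ)
    (d₀ : ℂ) (d φ : ℕ → ℝ)
    (L : ℕ → Finset ℕ) (hmono : ∀ lam, L lam ⊆ L (lam + 1))
    (hpos : ∀ lam, ∀ k ∈ L lam, 1 ≤ k) (hexh : ∀ k, 1 ≤ k → ∃ lam, k ∈ L lam)
    (δ : ℕ → ℝ) (hδ : Tendsto δ atTop (nhds 0))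
    (hconv : ∀ lam, ∀ x : ℝ,
      ‖f x - d₀ -
        ∑ k ∈ L lam, ((d k * Real.cos ((k : ℝ) * x + φ k) : ℝ) : ℂ)‖ ≤ δ lam)
    (ε : ℕ → ℝ) (hε : Tendsto ε atTop (nhds 0))
    (hblock : ∀ lam, ∃ τ : ℕ → ℕ,
      Set.BijOn τ (Set.Icc 1 ((L (lam + 1) \ L lam).card))
        ((L (lam + 1) \ L lam : Finset ℕ) : Set ℕ) ∧
      ∀ m, m ≤ (L (lam + 1) \ L lam).card → ∀ x : ℝ,
        |∑ j ∈ Finset.Icc 1 m, d (τ j) * Real.cos ((τ j : ℝ) * x + φ (τ j))|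
          ≤ ε lam +
            ⨆ y : ℝ, |∑ k ∈ L (lam + 1) \ L lam,
              d k * Real.cos ((k : ℝ) * y + φ k)|) :
    ∃ σ : ℕ → ℕ, Set.BijOn σ {k : ℕ | 1 ≤ k} {k : ℕ | 1 ≤ k} ∧
      (∀ lam, σ '' Set.Icc 1 (L lam).card = (L lam : Set ℕ)) ∧
      Tendsto (fun m : ℕ =>
          ⨆ x : ℝ, ‖f x - d₀ -
            ∑ j ∈ Finset.Icc 1 m,
              ((d (σ j) * Real.cos ((σ j : ℝ) * x + φ (σ j)) : ℝ) : ℂ)‖)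
        atTop (nhds 0) := by
  choose τ hτ hτle using hblock
  have hL : Monotone L := monotone_nat_of_le_succ hmono
  have hunb := exists_le_card_of_forall_mem hL hexh
  obtain ⟨σ, hσ, hsum⟩ := exists_enum_of_blocks (β := ℂ) hL hτ
  have hcover : ⋃ n, (L n : Set ℕ) = {k | 1 ≤ k} := Set.ext fun k =>
    ⟨fun hk => (mem_iUnion.1 hk).elim fun n hn => hpos n k hn, fun hk => mem_iUnion.2 (hexh k hk)⟩
  have hblk (n : ℕ) : ⨆ y : ℝ, |∑ k ∈ L (n + 1) \ L n, d k * Real.cos ((k : ℝ) * y + φ k)|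
      ≤ δ n + δ (n + 1) := ciSup_le fun y => by
    have := norm_sum_sdiff_le (hmono n) (f y - d₀)
      fun k => ((d k * Real.cos (k * y + φ k) : ℝ) : ℂ)
    rw [← Complex.ofReal_sum, Complex.norm_real, Real.norm_eq_abs] at this
    exact this.trans (add_le_add (hconv n y) (hconv (n + 1) y))
  have hbij := bijOn_Ici_one_iUnion hL hunb hσ
  rw [hcover] at hbij
  refine ⟨σ, hbij, fun n => (hσ n).image_eq, ?_⟩
  refine tendsto_zero_of_le_on_blocks (c := fun n => (L n).card)
    (fun _ _ h => Finset.card_le_card (hL h)) hunb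
    (fun m => Real.iSup_nonneg fun _ => norm_nonneg _)
    (b := fun n => δ n + (ε n + (δ n + δ (n + 1)))) ?_ fun n m h₁ h₂ => ciSup_le fun x => ?_
  · simpa using hδ.add (hε.add (hδ.add (hδ.comp (tendsto_add_atTop_nat 1))))
  have hm : m - (L n).card ≤ (L (n + 1) \ L n).card := by
    rw [Finset.card_sdiff_of_subset (hmono n)]; omega
  rw [hsum (fun k => ((d k * Real.cos (k * x + φ k) : ℝ) : ℂ)) n m h₁ h₂, ← sub_sub]
  refine (norm_sub_le _ _).trans (add_le_add (hconv n x) ?_)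
  rw [← Complex.ofReal_sum, Complex.norm_real, Real.norm_eq_abs]
  exact (hτle n _ hm x).trans (add_le_add le_rfl (hblk n))

/-- Gluing step in the proof of Theorem 4: if `‖f - d₀ - ∑_{k∈L λ} A k‖_∞ → 0` along an
increasing exhausting sequence of finite index sets `L λ`, and each block
`L (λ+1) \ L λ` admits an ordering all of whose partial sums have sup norm at most
`ε λ + ‖∑_{block} A k‖` with `ε λ → 0`, then there is a bijection `σ` of the index set
(enumerating the `L λ` in blocks) with `‖f - d₀ - ∑_{j=1}^m A (σ j)‖_∞ → 0`. -/
theorem stmt12 (f : ℝ → ℂ) (hf : Continuous f) (hper : ∀ x, f (x + 2 * Real.pi) = f x)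
    (d₀ : ℂ) (d φ : ℕ → ℝ)
    (L : ℕ → Finset ℕ) (hmono : ∀ lam, L lam ⊆ L (lam + 1))
    (hpos : ∀ lam, ∀ k ∈ L lam, 1 ≤ k) (hexh : ∀ k, 1 ≤ k → ∃ lam, k ∈ L lam)
    (δ : ℕ → ℝ) (hδ : Tendsto δ atTop (nhds 0))
    (hconv : ∀ lam, ∀ x : ℝ,
      ‖f x - d₀ -
        ∑ k ∈ L lam, ((d k * Real.cos ((k : ℝ) * x + φ k) : ℝ) : ℂ)‖ ≤ δ lam)
    (ε : ℕ → ℝ) (hε : Tendsto ε atTop (nhds 0))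
    (hblock : ∀ lam, ∃ τ : ℕ → ℕ,
      Set.BijOn τ (Set.Icc 1 ((L (lam + 1) \ L lam).card))
        ((L (lam + 1) \ L lam : Finset ℕ) : Set ℕ) ∧
      ∀ m, m ≤ (L (lam + 1) \ L lam).card → ∀ x : ℝ,
        |∑ j ∈ Finset.Icc 1 m, d (τ j) * Real.cos ((τ j : ℝ) * x + φ (τ j))|
          ≤ ε lam +
            ⨆ y : ℝ, |∑ k ∈ L (lam + 1) \ L lam,
              d k * Real.cos ((k : ℝ) * y + φ k)|) :
    ∃ σ : ℕ → ℕ, Set.BijOn σ {k : ℕ | 1 ≤ k} {k : ℕ | 1 ≤ k} ∧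
      (∀ lam, σ '' Set.Icc 1 (L lam).card = (L lam : Set ℕ)) ∧
      Tendsto (fun m : ℕ =>
          ⨆ x : ℝ, ‖f x - d₀ -
            ∑ j ∈ Finset.Icc 1 m,
              ((d (σ j) * Real.cos ((σ j : ℝ) * x + φ (σ j)) : ℝ) : ℂ)‖)
        atTop (nhds 0) :=
  stmt12_general f d₀ d φ L hmono hpos hexh δ hδ hconv ε hε hblock
end
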